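/- Let {U(S)} be the NTU LP game given by A, {b^i}, and {v^i} on a finite nonempty player set N, and let P' ⊆ ℝ^J × ℝ^N be a polyhedron satisfying conv(C'(N)) ⊆ P' ⊆ Z(N). Let (x*, u*) be an extreme point of P'. If u* ∉ C(N), then there exists a nonempty coalition S ⊆ N such that (x*, u*) ∈ int U'(S), the point (x*, u*) does not belong to conv(P' \ int U'(S)), and conv(C'(N)) ⊆ conv(P' \ int U'(S)); consequently P' can be strictly strengthened to a polyhedron P̂' with conv(C'(N)) ⊆ P̂' ⊊ P' (by intersecting with a half-space containing conv(P' \ int U'(S)) but not (x*, u*)). -/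

import Mathlib

open Finset

/-- The design space `X(S)` of a coalition `S` in an NTU LP game. -/
def designSpace {K J N : Type*} [Fintype J] (A : K → J → ℝ) (b : N → K → ℝ)
    (S : Finset N) : Set (J → ℝ) :=
  {x | (∀ j, 0 ≤ x j) ∧ ∀ k, (∑ j, A k j * x j) ≤ ∑ i ∈ S, b i k}

/-- The design-utility space `Z(S)` of a coalition `S`. -/
def duSpace {K J N : Type*} [Fintype J] (A : K → J → ℝ) (b : N → K → ℝ)
    (v : N → J → ℝ) (S : Finset N) : Set ((J → ℝ) × (N → ℝ)) :=
  {p | p.1 ∈ designSpace A b S ∧ ∀ i ∈ S, p.2 i ≤ ∑ j, v i j * p.1 j}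

/-- The utility space `U(S) = proj_u Z(S)` of a coalition `S`. -/
def utilitySpace {K J N : Type*} [Fintype J] (A : K → J → ℝ) (b : N → K → ℝ)
    (v : N → J → ℝ) (S : Finset N) : Set (N → ℝ) :=
  Prod.snd '' duSpace A b v S

/-- The extended set `U'(S) = ℝᴶ × U(S)`. -/
def utilitySpaceExt {K J N : Type*} [Fintype J] (A : K → J → ℝ) (b : N → K → ℝ)
    (v : N → J → ℝ) (S : Finset N) : Set ((J → ℝ) × (N → ℝ)) :=
  {p | p.2 ∈ utilitySpace A b v S}

/-- The core `C(N) = U(N) \ ⋃_{∅ ≠ S ⊆ N} int U(S)` of an NTU LP game. -/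
def core {K J N : Type*} [Fintype J] [Fintype N] (A : K → J → ℝ) (b : N → K → ℝ)
    (v : N → J → ℝ) : Set (N → ℝ) :=
  utilitySpace A b v Finset.univ \
    ⋃ (S : Finset N) (_ : S.Nonempty), interior (utilitySpace A b v S)

/-- The extended core `C'(N) = Z(N) \ ⋃_{∅ ≠ S ⊆ N} int U'(S)`. -/
def coreExt {K J N : Type*} [Fintype J] [Fintype N] (A : K → J → ℝ) (b : N → K → ℝ)
    (v : N → J → ℝ) : Set ((J → ℝ) × (N → ℝ)) :=
  duSpace A b v Finset.univ \
    ⋃ (S : Finset N) (_ : S.Nonempty), interior (utilitySpaceExt A b v S)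

/-!
An extreme point `z` of a polyhedron `{y | ∀ l, f l y ≤ d l}` is a vertex: the active
constraints have trivial common kernel, so their sum `c` satisfies
`c y + α ‖y - z‖ ≤ c z` on the polyhedron for some `α > 0`. Hence `c` separates `z` strictly
from the part of the polyhedron outside any neighbourhood of `z`. For the game, `u* ∉ C(N)`
while `u* ∈ U(N)` yields a coalition `S` with `(x*, u*) ∈ int U'(S)`; the cut separating
`(x*, u*)` from `P' \ int U'(S)` keeps `C'(N)`, which avoids `int U'(S)`.
-/

open Filter Topology

section Polyhedron

variable {E ι : Type*}

def polyhedron [AddCommGroup E] [Module ℝ E] (f : ι → E →ₗ[ℝ] ℝ) (d : ι → ℝ) : Set E :=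
  {y | ∀ l, f l y ≤ d l}

theorem eq_zero_of_forall_active_map_eq_zero [AddCommGroup E] [Module ℝ E] [Finite ι]
    {f : ι → E →ₗ[ℝ] ℝ} {d : ι → ℝ} {z : E} (hz : z ∈ (polyhedron f d).extremePoints ℝ)
    {w : E} (hw : ∀ l, f l z = d l → f l w = 0) : w = 0 := by
  have hnear : ∀ᶠ t in 𝓝 (0 : ℝ), z + t • w ∈ polyhedron f d := by
    refine Filter.eventually_all.2 fun l => ?_
    simp only [map_add, map_smul, smul_eq_mul]
    rcases (hz.1 l).eq_or_lt with hactive | hinactive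
    · exact .of_forall fun t => by rw [hw l hactive, mul_zero, add_zero, hactive]
    · have hlim : Tendsto (fun t : ℝ => f l z + t * f l w) (𝓝 0) (𝓝 (f l z)) := by
        simpa using (continuous_const.add (continuous_id.mul continuous_const)).tendsto
          (0 : ℝ) (f := fun t : ℝ => f l z + t * f l w)
      exact (hlim.eventually_lt_const hinactive).mono fun _ => le_of_lt
  obtain ⟨ε, hε, hball⟩ := Metric.eventually_nhds_iff.1 hnear
  have hmem : ∀ t : ℝ, |t| = ε / 2 → z + t • w ∈ polyhedron f d := fun t ht =>
    hball (by rw [Real.dist_0_eq_abs, ht]; linarith)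
  have hseg : z ∈ openSegment ℝ (z + (ε / 2) • w) (z + (-(ε / 2)) • w) :=
    ⟨1 / 2, 1 / 2, by norm_num, by norm_num, by norm_num, by module⟩
  have hfix := hz.2 (hmem _ (abs_of_pos (half_pos hε)))
    (hmem _ (by rw [abs_neg, abs_of_pos (half_pos hε)])) hseg
  exact (smul_eq_zero.1 (add_eq_left.1 hfix)).resolve_left (half_pos hε).ne'

theorem exists_pos_mul_norm_le_neg_sum [NormedAddCommGroup E] [NormedSpace ℝ E]
    [FiniteDimensional ℝ E] (g : ι → E →ₗ[ℝ] ℝ) (s : Finset ι)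
    (hg : ∀ w, (∀ l ∈ s, g l w = 0) → w = 0) :
    ∃ α > 0, ∀ w, (∀ l ∈ s, g l w ≤ 0) → α * ‖w‖ ≤ -∑ l ∈ s, g l w := by
  let G : E →ₗ[ℝ] (s → ℝ) := LinearMap.pi fun l => g l
  have hker : LinearMap.ker G = ⊥ :=
    LinearMap.ker_eq_bot'.2 fun w hw => hg w fun l hl => congrFun hw ⟨l, hl⟩
  obtain ⟨K, hK, hanti⟩ := G.exists_antilipschitzWith hker
  refine ⟨(K : ℝ)⁻¹, by positivity, fun w hw => ?_⟩
  have hGw : ‖G w‖ ≤ -∑ l ∈ s, g l w := by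
    rw [← Finset.sum_neg_distrib]
    refine (pi_norm_le_iff_of_nonneg (Finset.sum_nonneg fun l hl => neg_nonneg.2 (hw l hl))).2
      fun l => ?_
    rw [Real.norm_eq_abs, LinearMap.pi_apply, abs_of_nonpos (hw l l.2)]
    exact Finset.single_le_sum (f := fun l => -g l w) (fun i hi => neg_nonneg.2 (hw i hi)) l.2
  calc (K : ℝ)⁻¹ * ‖w‖ ≤ ‖G w‖ :=
        (inv_mul_le_iff₀ (by positivity)).2 (ZeroHomClass.bound_of_antilipschitz G hanti w)
    _ ≤ _ := hGw

theorem exists_sum_add_mul_norm_sub_le_of_mem_extremePoints [NormedAddCommGroup E]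
    [NormedSpace ℝ E] [FiniteDimensional ℝ E] [Fintype ι] {f : ι → E →ₗ[ℝ] ℝ} {d : ι → ℝ}
    {z : E} (hz : z ∈ (polyhedron f d).extremePoints ℝ) :
    ∃ s : Finset ι, ∃ α > 0, ∀ y ∈ polyhedron f d,
      ∑ l ∈ s, f l y + α * ‖y - z‖ ≤ ∑ l ∈ s, f l z := by
  classical
  let s := Finset.univ.filter fun l => f l z = d l
  have hs : ∀ l ∈ s, f l z = d l := fun l hl => (Finset.mem_filter.1 hl).2
  obtain ⟨α, hα, hsharp⟩ := exists_pos_mul_norm_le_neg_sum f s fun w hw =>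
    eq_zero_of_forall_active_map_eq_zero hz fun l hl => hw l (Finset.mem_filter.2 ⟨by simp, hl⟩)
  refine ⟨s, α, hα, fun y hy => ?_⟩
  have hdir := hsharp (y - z) fun l hl => by rw [map_sub, hs l hl, sub_nonpos]; exact hy l
  simp only [map_sub, Finset.sum_sub_distrib] at hdir
  linarith

theorem exists_sum_le_lt_of_mem_extremePoints [NormedAddCommGroup E] [NormedSpace ℝ E]
    [FiniteDimensional ℝ E] [Fintype ι] {f : ι → E →ₗ[ℝ] ℝ} {d : ι → ℝ} {z : E}
    (hz : z ∈ (polyhedron f d).extremePoints ℝ) {O : Set E} (hO : O ∈ 𝓝 z) :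
    ∃ s : Finset ι, ∃ δ, (∀ y ∈ polyhedron f d \ O, ∑ l ∈ s, f l y ≤ δ) ∧
      δ < ∑ l ∈ s, f l z := by
  obtain ⟨s, α, hα, hsharp⟩ := exists_sum_add_mul_norm_sub_le_of_mem_extremePoints hz
  obtain ⟨ε, hε, hball⟩ := Metric.mem_nhds_iff.1 hO
  refine ⟨s, ∑ l ∈ s, f l z - α * ε, fun y hy => ?_, by nlinarith⟩
  have hfar : ε ≤ ‖y - z‖ := by
    by_contra! hnear
    exact hy.2 (hball (by rwa [Metric.mem_ball, dist_eq_norm]))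
  nlinarith [hsharp y hy.1]

end Polyhedron

section Game

variable {K J N : Type*} [Fintype J] [Fintype N]

def pairing : ((J → ℝ) × (N → ℝ)) →ₗ[ℝ] ((J → ℝ) × (N → ℝ)) →ₗ[ℝ] ℝ :=
  (LinearMap.coprodEquiv ℝ).toLinearMap ∘ₗ
    (dotProductBilin ℝ ℝ).prodMap (dotProductBilin ℝ ℝ)

theorem pairing_apply (c z : (J → ℝ) × (N → ℝ)) :
    pairing c z = (∑ j, c.1 j * z.1 j) + ∑ i, c.2 i * z.2 i := rfl

theorem exists_nonempty_mem_interior_utilitySpaceExt {A : K → J → ℝ} {b : N → K → ℝ}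
    {v : N → J → ℝ} {z : (J → ℝ) × (N → ℝ)} (hz : z ∈ duSpace A b v Finset.univ)
    (hcore : z.2 ∉ core A b v) :
    ∃ S : Finset N, S.Nonempty ∧ z ∈ interior (utilitySpaceExt A b v S) := by
  have hblocked : z.2 ∈ ⋃ (S : Finset N) (_ : S.Nonempty), interior (utilitySpace A b v S) :=
    not_not.1 fun h => hcore ⟨⟨z, hz, rfl⟩, h⟩
  simp only [Set.mem_iUnion, exists_prop] at hblocked
  obtain ⟨S, hS, hzS⟩ := hblocked
  exact ⟨S, hS, preimage_interior_subset_interior_preimage continuous_snd hzS⟩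

theorem disjoint_coreExt_interior_utilitySpaceExt (A : K → J → ℝ) (b : N → K → ℝ)
    (v : N → J → ℝ) {S : Finset N} (hS : S.Nonempty) :
    Disjoint (coreExt A b v) (interior (utilitySpaceExt A b v S)) :=
  Set.disjoint_left.2 fun _ hz hzS => hz.2 (Set.mem_biUnion hS hzS)

end Game

theorem ntulp_intersection_cut_exists_general {K J N : Type*}
    [Fintype J] [Fintype N]
    (A : K → J → ℝ) (b : N → K → ℝ) (v : N → J → ℝ)
    (P' : Set ((J → ℝ) × (N → ℝ)))
    (hpoly : ∃ (q : ℕ) (C : Fin q → (J → ℝ) × (N → ℝ)) (d : Fin q → ℝ),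
      P' = {z | ∀ l, ((∑ j, (C l).1 j * z.1 j) + ∑ i, (C l).2 i * z.2 i) ≤ d l})
    (hlow : convexHull ℝ (coreExt A b v) ⊆ P')
    (hup : P' ⊆ duSpace A b v Finset.univ)
    (zstar : (J → ℝ) × (N → ℝ))
    (hext : zstar ∈ Set.extremePoints ℝ P')
    (hnotcore : zstar.2 ∉ core A b v) :
    ∃ S : Finset N, S.Nonempty ∧
      zstar ∈ interior (utilitySpaceExt A b v S) ∧
      zstar ∉ convexHull ℝ (P' \ interior (utilitySpaceExt A b v S)) ∧
      convexHull ℝ (coreExt A b v) ⊆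
        convexHull ℝ (P' \ interior (utilitySpaceExt A b v S)) ∧
      ∃ (c : (J → ℝ) × (N → ℝ)) (d : ℝ),
        (∀ z ∈ P' \ interior (utilitySpaceExt A b v S),
          ((∑ j, c.1 j * z.1 j) + ∑ i, c.2 i * z.2 i) ≤ d) ∧
        d < ((∑ j, c.1 j * zstar.1 j) + ∑ i, c.2 i * zstar.2 i) ∧
        convexHull ℝ (coreExt A b v) ⊆
          (P' ∩ {z | ((∑ j, c.1 j * z.1 j) + ∑ i, c.2 i * z.2 i) ≤ d}) ∧
        (P' ∩ {z | ((∑ j, c.1 j * z.1 j) + ∑ i, c.2 i * z.2 i) ≤ d}) ⊂ P' := by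
  obtain ⟨q, C, d, rfl⟩ := hpoly
  obtain ⟨S, hS, hzS⟩ := exists_nonempty_mem_interior_utilitySpaceExt (hup hext.1) hnotcore
  obtain ⟨s, δ, hcut, hlt⟩ := exists_sum_le_lt_of_mem_extremePoints
    (f := fun l => pairing (C l)) (d := d) hext (isOpen_interior.mem_nhds hzS)
  have hsum : ∀ z, pairing (∑ l ∈ s, C l) z = ∑ l ∈ s, pairing (C l) z := fun z => by
    rw [map_sum, LinearMap.sum_apply]
  set D := {z | ∀ l, pairing (C l) z ≤ d l} \ interior (utilitySpaceExt A b v S)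
  have hcoreD : coreExt A b v ⊆ D := Set.subset_sdiff.2
    ⟨(subset_convexHull ℝ _).trans hlow, disjoint_coreExt_interior_utilitySpaceExt A b v hS⟩
  have hcutD : ∀ z ∈ D, pairing (∑ l ∈ s, C l) z ≤ δ := fun z hz => (hsum z).symm ▸ hcut z hz
  have hhullD : convexHull ℝ D ⊆ {z | pairing (∑ l ∈ s, C l) z ≤ δ} :=
    convexHull_min hcutD (convex_halfSpace_le (pairing _).isLinear δ)
  have hzcut : δ < pairing (∑ l ∈ s, C l) zstar := (hsum zstar).symm ▸ hlt
  refine ⟨S, hS, hzS, fun h => (hhullD h).not_gt hzcut, convexHull_mono hcoreD,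
    ∑ l ∈ s, C l, δ, hcutD, hzcut,
    Set.subset_inter hlow ((convexHull_mono hcoreD).trans hhullD), ?_⟩
  exact Set.ssubset_iff_of_subset Set.inter_subset_left |>.2
    ⟨zstar, hext.1, fun h => h.2.not_gt hzcut⟩

/-- Let `P'` be a polyhedron with `conv C'(N) ⊆ P' ⊆ Z(N)` and let `(x*, u*)` be an
extreme point of `P'` with `u* ∉ C(N)`.  Then there is a nonempty coalition `S` with
`(x*, u*) ∈ int U'(S)`, `(x*, u*) ∉ conv(P' \ int U'(S))`, and
`conv C'(N) ⊆ conv(P' \ int U'(S))`; consequently there is a cutting plane, i.e. a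
half-space containing `P' \ int U'(S)` but not `(x*, u*)`, whose intersection with
`P'` is a polyhedron `P̂'` with `conv C'(N) ⊆ P̂' ⊊ P'`. -/
theorem ntulp_intersection_cut_exists {K J N : Type*}
    [Fintype J] [Fintype K] [Fintype N] [Nonempty N]
    (A : K → J → ℝ) (b : N → K → ℝ) (v : N → J → ℝ)
    (P' : Set ((J → ℝ) × (N → ℝ)))
    (hpoly : ∃ (q : ℕ) (C : Fin q → (J → ℝ) × (N → ℝ)) (d : Fin q → ℝ),
      P' = {z | ∀ l, ((∑ j, (C l).1 j * z.1 j) + ∑ i, (C l).2 i * z.2 i) ≤ d l})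
    (hlow : convexHull ℝ (coreExt A b v) ⊆ P')
    (hup : P' ⊆ duSpace A b v Finset.univ)
    (zstar : (J → ℝ) × (N → ℝ))
    (hext : zstar ∈ Set.extremePoints ℝ P')
    (hnotcore : zstar.2 ∉ core A b v) :
    ∃ S : Finset N, S.Nonempty ∧
      zstar ∈ interior (utilitySpaceExt A b v S) ∧
      zstar ∉ convexHull ℝ (P' \ interior (utilitySpaceExt A b v S)) ∧
      convexHull ℝ (coreExt A b v) ⊆
        convexHull ℝ (P' \ interior (utilitySpaceExt A b v S)) ∧
      ∃ (c : (J → ℝ) × (N → ℝ)) (d : ℝ),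
        (∀ z ∈ P' \ interior (utilitySpaceExt A b v S),
          ((∑ j, c.1 j * z.1 j) + ∑ i, c.2 i * z.2 i) ≤ d) ∧
        d < ((∑ j, c.1 j * zstar.1 j) + ∑ i, c.2 i * zstar.2 i) ∧
        convexHull ℝ (coreExt A b v) ⊆
          (P' ∩ {z | ((∑ j, c.1 j * z.1 j) + ∑ i, c.2 i * z.2 i) ≤ d}) ∧
        (P' ∩ {z | ((∑ j, c.1 j * z.1 j) + ∑ i, c.2 i * z.2 i) ≤ d}) ⊂ P' :=
  ntulp_intersection_cut_exists_general A b v P' hpoly hlow hup zstar hext hnotcore
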